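/- For every iteration index l and every even machine index k with 2 ≤ k < K, there exists a subgradient v of Q_k at ζ_k^{l+1} such that v + μ_k^{l+1} C − γ_{k−1}^{l+1} + γ_k^{l+1} = 0. In other words, after every DSGCDMM iteration the dual feasibility condition holds exactly at the interior tail machines (the dual residual of tail machines is always zero). -/

import Mathlib

/-!
The update of an even machine `k` minimizes `Q_k` plus a smooth penalty made of three
augmented-Lagrangian terms, for the constraint `C⊤ζ = 0` and for the consensus with the two
neighbours. For a convex function plus a differentiable one, first-order optimality says that
minus the gradient of the smooth part is a subgradient of the convex part. The gradient of a term
`⟪ν, r ζ⟫ + (ρ/2)‖r ζ‖²` with affine residual `r` is the multiplier `ν + ρ r(ζ)` pushed back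
through `r`; since even machines use the neighbours `ζ_{k±1}^{l+1}` that also enter the dual
update, at the minimizer these multipliers are exactly `μ_k^{l+1}`, `γ_{k-1}^{l+1}` and
`γ_k^{l+1}`.
-/

open Finset Filter
open scoped RealInnerProductSpace

noncomputable section

def IsSubgrad {d : ℕ} (f : EuclideanSpace ℝ (Fin d) → ℝ)
    (x v : EuclideanSpace ℝ (Fin d)) : Prop :=
  ∀ z, f x + ⟪v, z - x⟫ ≤ f z

open Topology

section Gradient

variable {E : Type*} [NormedAddCommGroup E] [InnerProductSpace ℝ E] [CompleteSpace E]

theorem HasGradientAt.add {f g : E → ℝ} {f' g' x : E} (hf : HasGradientAt f f' x)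
    (hg : HasGradientAt g g' x) : HasGradientAt (fun z => f z + g z) (f' + g') x := by
  rw [hasGradientAt_iff_hasFDerivAt, map_add]
  exact HasFDerivAt.add hf hg

theorem hasGradientAt_inner_sub_const_add_norm_sq (ρ : ℝ) (ν b x : E) :
    HasGradientAt (fun z => ⟪ν, z - b⟫ + ρ / 2 * ‖z - b‖ ^ 2) (ν + ρ • (x - b)) x := by
  have hr : HasFDerivAt (fun z : E => z - b) (ContinuousLinearMap.id ℝ E) x :=
    (hasFDerivAt_id x).sub_const b
  refine (((hasFDerivAt_const ν x).inner ℝ hr).add (hr.norm_sq.const_mul (ρ / 2))).congr_fderiv ?_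
  ext h
  simp only [InnerProductSpace.toDual_apply_apply, inner_add_left, real_inner_smul_left,
    add_apply, ContinuousLinearMap.comp_apply, ContinuousLinearMap.prod_apply,
    zero_apply, ContinuousLinearMap.id_apply, fderivInnerCLM_apply,
    inner_zero_left, add_zero, smul_apply, coe_innerSL_apply, nsmul_eq_mul,
    Nat.cast_ofNat, smul_eq_mul]
  ring

theorem hasGradientAt_inner_const_sub_add_norm_sq (ρ : ℝ) (ν b x : E) :
    HasGradientAt (fun z => ⟪ν, b - z⟫ + ρ / 2 * ‖b - z‖ ^ 2) (-(ν + ρ • (b - x))) x := by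
  convert hasGradientAt_inner_sub_const_add_norm_sq ρ (-ν) b x using 1
  · ext z
    rw [inner_neg_left, ← inner_neg_right, neg_sub, norm_sub_rev]
  · module

theorem hasGradientAt_mul_inner_add_inner_sq (ρ m : ℝ) (C x : E) :
    HasGradientAt (fun z => m * ⟪C, z⟫ + ρ / 2 * ⟪C, z⟫ ^ 2) ((m + ρ * ⟪C, x⟫) • C) x := by
  have hr : HasFDerivAt (fun z : E => ⟪C, z⟫) (innerSL ℝ C) x := (innerSL ℝ C).hasFDerivAt
  refine ((hr.const_mul m).add ((hr.pow 2).const_mul (ρ / 2))).congr_fderiv ?_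
  ext h
  simp only [InnerProductSpace.toDual_apply_apply, real_inner_smul_left,
    add_apply, smul_apply, coe_innerSL_apply,
    Nat.add_one_sub_one, pow_one, nsmul_eq_mul, Nat.cast_ofNat, smul_eq_mul]
  ring

theorem ConvexOn.add_inner_neg_gradient_le_of_isMinOn_add {f φ : E → ℝ} {g x : E}
    (hf : ConvexOn ℝ Set.univ f) (hmin : IsMinOn (fun z => f z + φ z) Set.univ x)
    (hφ : HasGradientAt φ g x) (z : E) : f x + ⟪-g, z - x⟫ ≤ f z := by
  have hslope : Tendsto (fun t : ℝ => t⁻¹ • (φ (x + t • (z - x)) - φ x)) (𝓝[>] 0)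
      (𝓝 ⟪g, z - x⟫) := by
    simpa using hφ.hasFDerivAt.hasLineDerivAt (z - x) |>.tendsto_slope_zero_right
  have hbound : ∀ᶠ t in 𝓝[>] (0 : ℝ), f x - f z ≤ t⁻¹ • (φ (x + t • (z - x)) - φ x) := by
    filter_upwards [Ioo_mem_nhdsGT one_pos] with t ⟨ht0, ht1⟩
    have hconv : f (x + t • (z - x)) ≤ f x + t * (f z - f x) :=
      calc f (x + t • (z - x)) = f ((1 - t) • x + t • z) := by congr 1; module
        _ ≤ (1 - t) • f x + t • f z :=
          hf.2 (Set.mem_univ x) (Set.mem_univ z) (by linarith) ht0.le (by ring)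
        _ = f x + t * (f z - f x) := by simp only [smul_eq_mul]; ring
    have hle := isMinOn_univ_iff.1 hmin (x + t • (z - x))
    rw [smul_eq_mul, le_inv_mul_iff₀ ht0]
    nlinarith
  have hlim := ge_of_tendsto hslope hbound
  rw [inner_neg_left]
  linarith

end Gradient

theorem convexOn_norm_sub_sq {E F : Type*} [AddCommGroup E] [Module ℝ E] [NormedAddCommGroup F]
    [NormedSpace ℝ F] (y : F) (A : E →ₗ[ℝ] F) :
    ConvexOn ℝ Set.univ (fun x => ‖y - A x‖ ^ 2) :=
  ((convexOn_norm convex_univ).comp_affineMap (AffineMap.const ℝ E y - A.toAffineMap)).pow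
    (fun _ _ => norm_nonneg _) 2

theorem convexOn_sum_mul_abs {ι : Type*} [Fintype ι] {ω : ι → ℝ} (hω : ∀ j, 0 ≤ ω j) :
    ConvexOn ℝ Set.univ (fun x : EuclideanSpace ℝ ι => ∑ j, ω j * |x j|) := by
  refine ⟨convex_univ, fun x _ z _ a b ha hb _ => ?_⟩
  simp only [smul_eq_mul, Finset.mul_sum, ← Finset.sum_add_distrib]
  refine Finset.sum_le_sum fun j _ => ?_
  have h := abs_add_le (a * x j) (b * z j)
  rw [abs_mul, abs_mul, abs_of_nonneg ha, abs_of_nonneg hb] at h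
  simp only [PiLp.add_apply, PiLp.smul_apply, smul_eq_mul]
  nlinarith [mul_le_mul_of_nonneg_left h (hω j)]

theorem convexOn_lasso {ι F : Type*} [Fintype ι] [NormedAddCommGroup F] [NormedSpace ℝ F]
    {c lam : ℝ} (hc : 0 ≤ c) (hlam : 0 ≤ lam) {ω : ι → ℝ} (hω : ∀ j, 0 ≤ ω j) (y : F)
    (A : EuclideanSpace ℝ ι →ₗ[ℝ] F) :
    ConvexOn ℝ Set.univ (fun x => c * ‖y - A x‖ ^ 2 + lam * ∑ j, ω j * |x j|) :=
  ((convexOn_norm_sub_sq y A).smul hc).add ((convexOn_sum_mul_abs hω).smul hlam)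

theorem dsgcdmm_tail_dual_feasibility_interior_general
    (d K : ℕ)
    (n : ℕ → ℕ)
    (y : ∀ k, EuclideanSpace ℝ (Fin (n k)))
    (P : ∀ k, Matrix (Fin (n k)) (Fin d) ℝ)
    (lam : ℝ) (hlam : 0 ≤ lam)
    (ω : ℕ → Fin d → ℝ) (hω : ∀ k ∈ Icc 1 K, ∀ j, 0 ≤ ω k j)
    (C : EuclideanSpace ℝ (Fin d))
    (Q : ℕ → EuclideanSpace ℝ (Fin d) → ℝ)
    (hQ : ∀ k, ∀ x : EuclideanSpace ℝ (Fin d), Q k x =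
      (1 / (2 * (n k : ℝ))) * ‖y k - (P k).toEuclideanLin x‖ ^ 2
        + lam * ∑ j, ω k j * |x j|)
    (ρ : ℝ)
    (ζ : ℕ → ℕ → EuclideanSpace ℝ (Fin d))
    (μ : ℕ → ℕ → ℝ)
    (γ : ℕ → ℕ → EuclideanSpace ℝ (Fin d))
    (hdyneven : ∀ l : ℕ, ∀ k, Even k → 0 < k → k < K → ∀ z : EuclideanSpace ℝ (Fin d),
      Q k (ζ (l+1) k) + μ l k * ⟪C, ζ (l+1) k⟫ + (ρ/2) * ⟪C, ζ (l+1) k⟫ ^ 2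
          + ⟪γ l (k-1), ζ (l+1) (k-1) - ζ (l+1) k⟫ + ⟪γ l k, ζ (l+1) k - ζ (l+1) (k+1)⟫
          + (ρ/2) * ‖ζ (l+1) (k-1) - ζ (l+1) k‖ ^ 2 + (ρ/2) * ‖ζ (l+1) k - ζ (l+1) (k+1)‖ ^ 2
        ≤ Q k z + μ l k * ⟪C, z⟫ + (ρ/2) * ⟪C, z⟫ ^ 2
          + ⟪γ l (k-1), ζ (l+1) (k-1) - z⟫ + ⟪γ l k, z - ζ (l+1) (k+1)⟫
          + (ρ/2) * ‖ζ (l+1) (k-1) - z‖ ^ 2 + (ρ/2) * ‖z - ζ (l+1) (k+1)‖ ^ 2)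
    (hμ : ∀ l : ℕ, ∀ k ∈ Icc 1 K, μ (l+1) k = μ l k + ρ * ⟪C, ζ (l+1) k⟫)
    (hγ : ∀ l : ℕ, ∀ k ∈ Icc 1 (K-1),
      γ (l+1) k = γ l k + ρ • (ζ (l+1) k - ζ (l+1) (k+1)))
    :
    ∀ l : ℕ, ∀ k, Even k → 2 ≤ k → k < K →
      ∃ v : EuclideanSpace ℝ (Fin d), IsSubgrad (Q k) (ζ (l+1) k) v ∧
        v + μ (l+1) k • C - γ (l+1) (k-1) + γ (l+1) k = 0 := by
  intro l k hke hk2 hkK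
  have hμk := hμ l k (by simp only [mem_Icc]; omega)
  have hγk := hγ l k (by simp only [mem_Icc]; omega)
  have hγk' := hγ l (k - 1) (by simp only [mem_Icc]; omega)
  rw [Nat.sub_add_cancel (by omega : 1 ≤ k)] at hγk'
  set x := ζ (l+1) k
  set a := ζ (l+1) (k-1)
  set b := ζ (l+1) (k+1)
  have hconv : ConvexOn ℝ Set.univ (Q k) := by
    rw [show Q k = _ from funext (hQ k)]
    exact convexOn_lasso (by positivity) hlam (hω k (by simp only [mem_Icc]; omega)) (y k) _
  let φ : EuclideanSpace ℝ (Fin d) → ℝ := fun z =>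
    (μ l k * ⟪C, z⟫ + ρ / 2 * ⟪C, z⟫ ^ 2) + (⟪γ l (k-1), a - z⟫ + ρ / 2 * ‖a - z‖ ^ 2)
      + (⟪γ l k, z - b⟫ + ρ / 2 * ‖z - b‖ ^ 2)
  have hgrad : HasGradientAt φ (μ (l+1) k • C + -γ (l+1) (k-1) + γ (l+1) k) x := by
    rw [hμk, hγk, hγk']
    exact ((hasGradientAt_mul_inner_add_inner_sq ρ _ C x).add
      (hasGradientAt_inner_const_sub_add_norm_sq ρ _ a x)).add
      (hasGradientAt_inner_sub_const_add_norm_sq ρ _ b x)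
  have hmin : IsMinOn (fun z => Q k z + φ z) Set.univ x := isMinOn_univ_iff.2 fun z => by
    have := hdyneven l k hke (by omega) hkK z
    simp only [φ]
    linarith
  exact ⟨_, hconv.add_inner_neg_gradient_le_of_isMinOn_add hmin hgrad, by abel⟩

/-- after every DSGCDMM iteration the dual feasibility condition holds exactly at the interior tail machines (even k with 2 ≤ k < K). -/
theorem dsgcdmm_tail_dual_feasibility_interior
    (d K : ℕ) (hd : 1 ≤ d) (hK : 2 ≤ K) (hKeven : Even K)
    (n : ℕ → ℕ) (hn : ∀ k ∈ Icc 1 K, 1 ≤ n k)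
    (y : ∀ k, EuclideanSpace ℝ (Fin (n k)))
    (P : ∀ k, Matrix (Fin (n k)) (Fin d) ℝ)
    (lam : ℝ) (hlam : 0 ≤ lam)
    (ω : ℕ → Fin d → ℝ) (hω : ∀ k ∈ Icc 1 K, ∀ j, 0 ≤ ω k j)
    (C : EuclideanSpace ℝ (Fin d))
    (Q : ℕ → EuclideanSpace ℝ (Fin d) → ℝ)
    (hQ : ∀ k, ∀ x : EuclideanSpace ℝ (Fin d), Q k x =
      (1 / (2 * (n k : ℝ))) * ‖y k - (P k).toEuclideanLin x‖ ^ 2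
        + lam * ∑ j, ω k j * |x j|)
    (ρ : ℝ) (hρ : 0 < ρ)
    (ζ : ℕ → ℕ → EuclideanSpace ℝ (Fin d))
    (μ : ℕ → ℕ → ℝ)
    (γ : ℕ → ℕ → EuclideanSpace ℝ (Fin d))
    (hdyn1 : ∀ l : ℕ, ∀ z : EuclideanSpace ℝ (Fin d),
      Q 1 (ζ (l+1) 1) + μ l 1 * ⟪C, ζ (l+1) 1⟫ + (ρ/2) * ⟪C, ζ (l+1) 1⟫ ^ 2
          + ⟪γ l 1, ζ (l+1) 1 - ζ l 2⟫ + (ρ/2) * ‖ζ (l+1) 1 - ζ l 2‖ ^ 2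
        ≤ Q 1 z + μ l 1 * ⟪C, z⟫ + (ρ/2) * ⟪C, z⟫ ^ 2
          + ⟪γ l 1, z - ζ l 2⟫ + (ρ/2) * ‖z - ζ l 2‖ ^ 2)
    (hdynodd : ∀ l : ℕ, ∀ k, Odd k → 1 < k → k < K → ∀ z : EuclideanSpace ℝ (Fin d),
      Q k (ζ (l+1) k) + μ l k * ⟪C, ζ (l+1) k⟫ + (ρ/2) * ⟪C, ζ (l+1) k⟫ ^ 2
          + ⟪γ l (k-1), ζ l (k-1) - ζ (l+1) k⟫ + ⟪γ l k, ζ (l+1) k - ζ l (k+1)⟫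
          + (ρ/2) * ‖ζ l (k-1) - ζ (l+1) k‖ ^ 2 + (ρ/2) * ‖ζ (l+1) k - ζ l (k+1)‖ ^ 2
        ≤ Q k z + μ l k * ⟪C, z⟫ + (ρ/2) * ⟪C, z⟫ ^ 2
          + ⟪γ l (k-1), ζ l (k-1) - z⟫ + ⟪γ l k, z - ζ l (k+1)⟫
          + (ρ/2) * ‖ζ l (k-1) - z‖ ^ 2 + (ρ/2) * ‖z - ζ l (k+1)‖ ^ 2)
    (hdyneven : ∀ l : ℕ, ∀ k, Even k → 0 < k → k < K → ∀ z : EuclideanSpace ℝ (Fin d),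
      Q k (ζ (l+1) k) + μ l k * ⟪C, ζ (l+1) k⟫ + (ρ/2) * ⟪C, ζ (l+1) k⟫ ^ 2
          + ⟪γ l (k-1), ζ (l+1) (k-1) - ζ (l+1) k⟫ + ⟪γ l k, ζ (l+1) k - ζ (l+1) (k+1)⟫
          + (ρ/2) * ‖ζ (l+1) (k-1) - ζ (l+1) k‖ ^ 2 + (ρ/2) * ‖ζ (l+1) k - ζ (l+1) (k+1)‖ ^ 2
        ≤ Q k z + μ l k * ⟪C, z⟫ + (ρ/2) * ⟪C, z⟫ ^ 2
          + ⟪γ l (k-1), ζ (l+1) (k-1) - z⟫ + ⟪γ l k, z - ζ (l+1) (k+1)⟫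
          + (ρ/2) * ‖ζ (l+1) (k-1) - z‖ ^ 2 + (ρ/2) * ‖z - ζ (l+1) (k+1)‖ ^ 2)
    (hdynK : ∀ l : ℕ, ∀ z : EuclideanSpace ℝ (Fin d),
      Q K (ζ (l+1) K) + μ l K * ⟪C, ζ (l+1) K⟫ + (ρ/2) * ⟪C, ζ (l+1) K⟫ ^ 2
          + ⟪γ l (K-1), ζ (l+1) (K-1) - ζ (l+1) K⟫ + (ρ/2) * ‖ζ (l+1) (K-1) - ζ (l+1) K‖ ^ 2
        ≤ Q K z + μ l K * ⟪C, z⟫ + (ρ/2) * ⟪C, z⟫ ^ 2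
          + ⟪γ l (K-1), ζ (l+1) (K-1) - z⟫ + (ρ/2) * ‖ζ (l+1) (K-1) - z‖ ^ 2)
    (hμ : ∀ l : ℕ, ∀ k ∈ Icc 1 K, μ (l+1) k = μ l k + ρ * ⟪C, ζ (l+1) k⟫)
    (hγ : ∀ l : ℕ, ∀ k ∈ Icc 1 (K-1),
      γ (l+1) k = γ l k + ρ • (ζ (l+1) k - ζ (l+1) (k+1)))
    :
    ∀ l : ℕ, ∀ k, Even k → 2 ≤ k → k < K →
      ∃ v : EuclideanSpace ℝ (Fin d), IsSubgrad (Q k) (ζ (l+1) k) v ∧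
        v + μ (l+1) k • C - γ (l+1) (k-1) + γ (l+1) k = 0 :=
  dsgcdmm_tail_dual_feasibility_interior_general d K n y P lam hlam ω hω C Q hQ ρ ζ μ γ hdyneven hμ
    hγ
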